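/- The set of nodes in a rooted tree having an N-entry for a fixed document d, together with the edges given by the lowest-d-ancestor relation, forms a tree (every node with an N-entry for d other than the topmost one has a unique lowest proper ancestor with an N-entry for d, and the topmost node with an N-entry for d is the LCA of all leaves labeled d). -/
import Mathlib


/-- A finite rooted tree, given by a parent function, a depth function and an LCA
operation satisfying the usual specifications.  `parent root = root`, and every node
reaches the root by iterating `parent` (guaranteed by the depth axioms). -/
structure RTree (V : Type*) where
  root : V
  parent : V → V
  lca : V → V → V
  depth : V → ℕ
  parent_root : parent root = root
  depth_eq_zero_iff : ∀ v, depth v = 0 ↔ v = root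
  depth_parent : ∀ v, v ≠ root → depth (parent v) + 1 = depth v
  lca_anc_left : ∀ u v, ∃ k, parent^[k] u = lca u v
  lca_anc_right : ∀ u v, ∃ k, parent^[k] v = lca u v
  lca_greatest : ∀ u v w, (∃ k, parent^[k] u = w) → (∃ k, parent^[k] v = w) →
    ∃ k, parent^[k] (lca u v) = w

namespace RTree

variable {V : Type*} (T : RTree V)

/-- `u` is an ancestor of `v` (possibly `u = v`). -/
def Anc (u v : V) : Prop := ∃ k, T.parent^[k] v = u

/-- `u` is a proper (strict) ancestor of `v`. -/
def ProperAnc (u v : V) : Prop := T.Anc u v ∧ u ≠ v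

/-- `c` is a child of `u`. -/
def IsChild (c u : V) : Prop := T.parent c = u ∧ c ≠ u

/-- A leaf is a node without children. -/
def IsLeaf (v : V) : Prop := ∀ c, ¬ T.IsChild c v

end RTree

/-- Node `w` has an N-entry for document `d`: either `w` is a leaf labeled `d`, or `w`
is internal and at least two (distinct) children of `w` contain a leaf labeled `d` in
their subtrees. -/
def HasNEntry {V D : Type*} (T : RTree V) (doc : V → D) (d : D) (w : V) : Prop :=
  (T.IsLeaf w ∧ doc w = d) ∨
  (¬ T.IsLeaf w ∧ ∃ c₁ c₂, T.IsChild c₁ w ∧ T.IsChild c₂ w ∧ c₁ ≠ c₂ ∧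
    (∃ lf, T.IsLeaf lf ∧ doc lf = d ∧ T.Anc c₁ lf) ∧
    (∃ lf, T.IsLeaf lf ∧ doc lf = d ∧ T.Anc c₂ lf))

/-- `u` is the lowest proper ancestor of `w` having an N-entry for `d`. -/
def IsLowestDAnc {V D : Type*} (T : RTree V) (doc : V → D) (d : D) (u w : V) : Prop :=
  HasNEntry T doc d u ∧ T.ProperAnc u w ∧
    ∀ x, HasNEntry T doc d x → T.ProperAnc x w → T.Anc x u

namespace RTree

variable {V : Type*} (T : RTree V)

lemma anc_refl (v : V) : T.Anc v v := ⟨0, rfl⟩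

lemma anc_trans {a b c : V} (h1 : T.Anc a b) (h2 : T.Anc b c) : T.Anc a c := by
  obtain ⟨j, hj⟩ := h1; obtain ⟨k, hk⟩ := h2
  exact ⟨j + k, by rw [Function.iterate_add_apply, hk, hj]⟩

lemma anc_parent (v : V) : T.Anc (T.parent v) v := ⟨1, rfl⟩

lemma depth_parent_le (v : V) : T.depth (T.parent v) ≤ T.depth v := by
  by_cases h : v = T.root
  · subst h; rw [T.parent_root]
  · have := T.depth_parent v h; omega

lemma depth_iterate_le (k : ℕ) (v : V) : T.depth (T.parent^[k] v) ≤ T.depth v := by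
  induction k with
  | zero => simp
  | succ k ih =>
    rw [Function.iterate_succ_apply']
    exact le_trans (T.depth_parent_le _) ih

lemma anc_depth_le {a b : V} (h : T.Anc a b) : T.depth a ≤ T.depth b := by
  obtain ⟨k, hk⟩ := h
  rw [← hk]; exact T.depth_iterate_le k b

lemma root_anc (v : V) : T.Anc T.root v := by
  suffices h : T.parent^[T.depth v] v = T.root from ⟨_, h⟩
  generalize h : T.depth v = n
  induction n generalizing v with
  | zero => simpa using (T.depth_eq_zero_iff v).mp h
  | succ n ih =>
    have hv : v ≠ T.root := by
      intro hr
      have h0 : T.depth v = 0 := (T.depth_eq_zero_iff v).mpr hr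
      omega
    have hp := T.depth_parent v hv
    rw [Function.iterate_succ_apply]
    exact ih (T.parent v) (by omega)

lemma iterate_eq_of_depth_eq : ∀ (k : ℕ) (v : V),
    T.depth (T.parent^[k] v) = T.depth v → T.parent^[k] v = v := by
  intro k
  induction k with
  | zero => intro v _; rfl
  | succ k ih =>
    intro v h
    by_cases hv : v = T.root
    · subst hv
      rw [Function.iterate_succ_apply, T.parent_root] at h ⊢
      exact ih _ h
    · exfalso
      have hp := T.depth_parent v hv
      have hle := T.depth_iterate_le k (T.parent v)
      rw [Function.iterate_succ_apply] at h
      omega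

lemma eq_of_anc_of_depth {a b : V} (h : T.Anc a b) (hd : T.depth a = T.depth b) : a = b := by
  obtain ⟨k, hk⟩ := h
  rw [← hk]
  exact T.iterate_eq_of_depth_eq k b (by rw [hk]; exact hd)

lemma anc_antisymm {a b : V} (h1 : T.Anc a b) (h2 : T.Anc b a) : a = b :=
  T.eq_of_anc_of_depth h1 (le_antisymm (T.anc_depth_le h1) (T.anc_depth_le h2))

lemma anc_total {a b v : V} (ha : T.Anc a v) (hb : T.Anc b v) : T.Anc a b ∨ T.Anc b a := by
  obtain ⟨j, hj⟩ := ha; obtain ⟨k, hk⟩ := hb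
  rcases le_total j k with h | h
  · exact Or.inr ⟨k - j, by rw [← hj, ← Function.iterate_add_apply, Nat.sub_add_cancel h, hk]⟩
  · exact Or.inl ⟨j - k, by rw [← hk, ← Function.iterate_add_apply, Nat.sub_add_cancel h, hj]⟩

lemma depth_child {c u : V} (h : T.IsChild c u) : T.depth c = T.depth u + 1 := by
  have hc : c ≠ T.root := by
    intro hr
    apply h.2
    rw [hr] at h ⊢
    rw [← h.1, T.parent_root]
  have := T.depth_parent c hc
  rw [h.1] at this
  omega

lemma exists_child_anc {r v : V} (h : T.Anc r v) (hne : r ≠ v) :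
    ∃ c, T.IsChild c r ∧ T.Anc c v := by
  classical
  have hex : ∃ k, T.parent^[k] v = r := h
  have hk : T.parent^[Nat.find hex] v = r := Nat.find_spec hex
  have hk0 : Nat.find hex ≠ 0 := by
    intro h0
    rw [h0] at hk
    have hvr : v = r := by simpa using hk
    exact hne hvr.symm
  refine ⟨T.parent^[Nat.find hex - 1] v, ⟨?_, ?_⟩, ⟨Nat.find hex - 1, rfl⟩⟩
  · have h1 : Nat.find hex - 1 + 1 = Nat.find hex :=
      Nat.sub_add_cancel (Nat.one_le_iff_ne_zero.mpr hk0)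
    rw [← h1, Function.iterate_succ_apply'] at hk
    exact hk
  · intro heq
    exact Nat.find_min hex (Nat.sub_lt (Nat.pos_of_ne_zero hk0) one_pos) heq

lemma eq_of_leaf_anc {r v : V} (hl : T.IsLeaf r) (h : T.Anc r v) : r = v := by
  by_contra hne
  obtain ⟨c, hc, -⟩ := T.exists_child_anc h hne
  exact hl c hc

lemma exists_lowest (S : Set V) (v0 : V) (hS : ∀ a ∈ S, T.Anc a v0) (hne : S.Nonempty) :
    ∃ r ∈ S, ∀ a ∈ S, T.Anc a r := by
  classical
  have hex : ∃ k, T.parent^[k] v0 ∈ S := by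
    obtain ⟨a, ha⟩ := hne
    obtain ⟨k, hk⟩ := hS a ha
    exact ⟨k, by rw [hk]; exact ha⟩
  refine ⟨T.parent^[Nat.find hex] v0, Nat.find_spec hex, ?_⟩
  intro a ha
  obtain ⟨j, hj⟩ := hS a ha
  have hle : Nat.find hex ≤ j := by
    by_contra hlt
    push_neg at hlt
    exact Nat.find_min hex hlt (by rw [hj]; exact ha)
  exact ⟨j - Nat.find hex,
    by rw [← Function.iterate_add_apply, Nat.sub_add_cancel hle, hj]⟩

end RTree

/-- For a fixed document `d` (occurring at some leaf), the nodes with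
an N-entry for `d` together with the lowest-`d`-ancestor pointers form a tree: there is
a unique topmost node `r` with an N-entry for `d` which is an ancestor of all nodes
with an N-entry for `d`; it is the LCA of all leaves labeled `d` (a common ancestor of
all such leaves below every other common ancestor); and every other node with an
N-entry for `d` has a unique lowest proper ancestor with an N-entry for `d`. -/
theorem NEntry_structure_is_tree {V D : Type*} (T : RTree V) (doc : V → D) (d : D)
    (hd : ∃ v, T.IsLeaf v ∧ doc v = d) :
    ∃! r : V, HasNEntry T doc d r ∧
      (∀ x, HasNEntry T doc d x → T.Anc r x) ∧
      (∀ lf, T.IsLeaf lf → doc lf = d → T.Anc r lf) ∧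
      (∀ a, (∀ lf, T.IsLeaf lf → doc lf = d → T.Anc a lf) → T.Anc a r) ∧
      (∀ w, HasNEntry T doc d w → w ≠ r → ∃! u, IsLowestDAnc T doc d u w) := by
  classical
  obtain ⟨v0, hv0leaf, hv0doc⟩ := hd
  set S : Set V := {a | ∀ lf, T.IsLeaf lf → doc lf = d → T.Anc a lf} with hSdef
  have hSanc : ∀ a ∈ S, T.Anc a v0 := fun a ha => ha v0 hv0leaf hv0doc
  have hSne : S.Nonempty := ⟨T.root, fun lf _ _ => T.root_anc lf⟩
  obtain ⟨r, hrS, hrmin⟩ := T.exists_lowest S v0 hSanc hSne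
  have hrv0 : T.Anc r v0 := hrS v0 hv0leaf hv0doc
  -- r has an N-entry
  have hrN : HasNEntry T doc d r := by
    by_cases hleaf : T.IsLeaf r
    · left
      have heq : r = v0 := T.eq_of_leaf_anc hleaf hrv0
      rw [heq]
      exact ⟨heq ▸ hleaf, hv0doc⟩
    · right
      have hrne : r ≠ v0 := by
        intro h; rw [h] at hleaf; exact hleaf hv0leaf
      obtain ⟨c0, hc0, hc0anc⟩ := T.exists_child_anc hrv0 hrne
      by_cases hsplit : ∃ lf c, T.IsLeaf lf ∧ doc lf = d ∧ T.IsChild c r ∧ T.Anc c lf ∧ c ≠ c0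
      · obtain ⟨lf, c, h1, h2, h3, h4, h5⟩ := hsplit
        exact ⟨hleaf, c, c0, h3, hc0, h5, ⟨lf, h1, h2, h4⟩, ⟨v0, hv0leaf, hv0doc, hc0anc⟩⟩
      · exfalso
        push_neg at hsplit
        have hc0S : c0 ∈ S := by
          intro lf hlf hdoc
          have hne : r ≠ lf := by
            intro h; rw [h] at hleaf; exact hleaf hlf
          obtain ⟨c, hc, hcanc⟩ := T.exists_child_anc (hrS lf hlf hdoc) hne
          have hcc0 : c = c0 := hsplit lf c hlf hdoc hc hcanc
          rw [← hcc0]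
          exact hcanc
        have h1 := T.anc_depth_le (hrmin c0 hc0S)
        have h2 := T.depth_child hc0
        omega
  -- r is an ancestor of every node with an N-entry
  have hrtop : ∀ x, HasNEntry T doc d x → T.Anc r x := by
    intro x hx
    rcases hx with ⟨hxleaf, hxdoc⟩ |
      ⟨hxint, c₁, c₂, hc₁, hc₂, hcc, ⟨lf₁, hl₁, hd₁, ha₁⟩, ⟨lf₂, hl₂, hd₂, ha₂⟩⟩
    · exact hrS x hxleaf hxdoc
    · have hr₁ : T.Anc r lf₁ := hrS lf₁ hl₁ hd₁
      have hr₂ : T.Anc r lf₂ := hrS lf₂ hl₂ hd₂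
      have hx₁ : T.Anc x c₁ := by
        refine ⟨1, ?_⟩
        simpa using hc₁.1
      have hd₁' := T.depth_child hc₁
      have hd₂' := T.depth_child hc₂
      rcases T.anc_total hr₁ ha₁ with hrc | hcr
      · -- r is an ancestor of c₁
        rcases T.anc_total hrc hx₁ with h | h
        · exact h
        · -- x is an ancestor of r
          have e1 := T.anc_depth_le hrc
          have e2 := T.anc_depth_le h
          by_cases he : T.depth x = T.depth r
          · have hxr : x = r := T.eq_of_anc_of_depth h he
            rw [← hxr]
            exact T.anc_refl x
          · exfalso
            have hrc1 : r = c₁ := T.eq_of_anc_of_depth hrc (by omega)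
            rcases T.anc_total hr₂ ha₂ with h2 | h2
            · have hre : r = c₂ := T.eq_of_anc_of_depth h2 (by omega)
              exact hcc (hrc1.symm.trans hre)
            · have hre : c₂ = r := T.eq_of_anc_of_depth h2
                (by have := T.anc_depth_le h2; omega)
              exact hcc (hre.trans hrc1).symm
      · -- c₁ is an ancestor of r
        exfalso
        have e1 := T.anc_depth_le hcr
        rcases T.anc_total hr₂ ha₂ with h2 | h2
        · have e2 := T.anc_depth_le h2
          have hre : r = c₂ := T.eq_of_anc_of_depth h2 (by omega)
          have : c₁ = c₂ := T.eq_of_anc_of_depth (hre ▸ hcr) (by omega)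
          exact hcc this
        · rcases T.anc_total hcr h2 with h3 | h3
          · exact hcc (T.eq_of_anc_of_depth h3 (by omega))
          · exact hcc (T.eq_of_anc_of_depth h3 (by omega)).symm
  refine ⟨r, ⟨hrN, hrtop, fun lf h1 h2 => hrS lf h1 h2, fun a ha => hrmin a ha, ?_⟩, ?_⟩
  · -- unique lowest proper d-ancestor for every other N-entry node
    intro w hwN hwr
    set A : Set V := {x | HasNEntry T doc d x ∧ T.ProperAnc x w} with hAdef
    have hAanc : ∀ a ∈ A, T.Anc a w := fun a ha => ha.2.1
    have hAne : A.Nonempty := ⟨r, hrN, hrtop w hwN, fun h => hwr h.symm⟩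
    obtain ⟨u, huA, humax⟩ := T.exists_lowest A w hAanc hAne
    refine ⟨u, ⟨huA.1, huA.2, fun x hx1 hx2 => humax x ⟨hx1, hx2⟩⟩, ?_⟩
    intro u' hu'
    exact T.anc_antisymm (humax u' ⟨hu'.1, hu'.2.1⟩) (hu'.2.2 u huA.1 huA.2)
  · -- uniqueness of r
    intro r' hr'
    exact T.anc_antisymm (hr'.2.1 r hrN) (hrtop r' hr'.1)
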